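/- Let 0 < C < 1 and η < 1. Then ∫_{−∞}^{η} ∫_{−∞}^{−(1/C)√(2(1−y))} (x² + y² − 1)^{−3/2} dx dy = (1/√(1−C²))·artanh( √(1−C²) / √(1 − C²(1+η)/2) ) − artanh( (2 − C² + 2√(1 − C²(1+η)/2)) / (2 − C²η + 2√(1 − C²(1+η)/2)) ). (This is the Study–de Sitter area of the region Ẽ^C_η = {(x,y) : C²x² + 2y − 2 ≤ 0, y ≤ η, x ≤ 0}, which lies outside the unit circle.) -/

import Mathlib

open MeasureTheory

noncomputable def artanh (x : ℝ) : ℝ := Real.log ((1 + x) / (1 - x)) / 2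

open Set Filter Topology

/-! The inner integral is elementary: `-(r (r + x))⁻¹` with `r = √(x² + b)` is a primitive of
`(x² + b) ^ (-3/2)` vanishing at `+∞`. At height `y` its value at the boundary of the region gives
the density `C² / (2 (1 - y) s (s + 1))`, where `s = √(1 - C² (1 + y) / 2)`. Writing
`k = √(1 - C²)`, this density is `(k² - 1) / ((s² - k²) (s + 1)) · ds/dy`; that rational function of `s` has the
primitive `areaPrimitive k`, a combination of two `artanh` terms vanishing as `s → ∞`, i.e. as
`y → -∞`. -/

lemma artanh_zero : artanh 0 = 0 := by simp [artanh]

lemma hasDerivAt_artanh {x : ℝ} (hx : |x| < 1) : HasDerivAt artanh (1 / (1 - x ^ 2)) x := by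
  obtain ⟨hx₁, hx₂⟩ := abs_lt.1 hx
  have hq : HasDerivAt (fun t => (1 + t) / (1 - t)) (2 / (1 - x) ^ 2) x := by
    refine (((hasDerivAt_id x).const_add 1).fun_div ((hasDerivAt_id x).const_sub 1)
      (by simp only [id]; linarith)).congr_deriv ?_
    simp only [id]
    ring
  have h := (hq.log (div_pos (by linarith) (by linarith)).ne').div_const 2
  refine h.congr_deriv ?_
  rw [show 1 - x ^ 2 = (1 - x) * (1 + x) by ring]
  have : 1 - x ≠ 0 := by linarith
  have : 1 + x ≠ 0 := by linarith
  field_simp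

lemma continuousAt_artanh_zero : ContinuousAt artanh 0 :=
  (hasDerivAt_artanh (by simp)).continuousAt

lemma rpow_neg_three_halves {q : ℝ} (hq : 0 ≤ q) : q ^ (-(3:ℝ)/2) = (√q ^ 3)⁻¹ := by
  rw [Real.sqrt_eq_rpow, ← Real.rpow_natCast, ← Real.rpow_mul hq, ← Real.rpow_neg hq]
  norm_num

lemma integral_Iic_of_hasDerivAt_of_nonneg' {g g' : ℝ → ℝ} {a l : ℝ}
    (hderiv : ∀ x ∈ Iic a, HasDerivAt g (g' x) x) (g'pos : ∀ x ∈ Iio a, 0 ≤ g' x)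
    (hg : Tendsto g atBot (𝓝 l)) : ∫ x in Iic a, g' x = g a - l := by
  have hderiv' : ∀ x ∈ Ici (-a), HasDerivAt (fun x => -g (-x)) (g' (-x)) x := fun x hx =>
    (((hderiv (-x) (neg_le.1 (mem_Ici.1 hx))).comp x (hasDerivAt_neg' x)).neg).congr_deriv
      (by ring)
  rw [← neg_neg a, ← integral_comp_neg_Ioi, integral_Ioi_of_hasDerivAt_of_nonneg' hderiv'
    (fun x hx => g'pos _ (neg_lt.1 (mem_Ioi.1 hx))) (hg.comp tendsto_neg_atTop_atBot).neg]
  simp only [neg_neg]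
  ring

lemma hasDerivAt_neg_inv_sqrt_mul {b x : ℝ} (hx : 0 ≤ x) (hxb : 0 < x ^ 2 + b) :
    HasDerivAt (fun t => -(√(t ^ 2 + b) * (√(t ^ 2 + b) + t))⁻¹)
      ((x ^ 2 + b) ^ (-(3:ℝ)/2)) x := by
  have hr0 : 0 < √(x ^ 2 + b) := Real.sqrt_pos.2 hxb
  have hr : HasDerivAt (fun t => √(t ^ 2 + b)) (x / √(x ^ 2 + b)) x := by
    refine (((hasDerivAt_pow 2 x).add_const b).sqrt hxb.ne').congr_deriv ?_
    field_simp
    ring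
  refine ((hr.fun_mul (hr.fun_add (hasDerivAt_id' x))).fun_inv (by positivity)).fun_neg
    |>.congr_deriv ?_
  rw [rpow_neg_three_halves hxb.le]
  generalize √(x ^ 2 + b) = r at hr0 ⊢
  field_simp
  ring

lemma tendsto_neg_inv_sqrt_mul_atTop (b : ℝ) :
    Tendsto (fun t => -(√(t ^ 2 + b) * (√(t ^ 2 + b) + t))⁻¹) atTop (𝓝 0) := by
  have hr : Tendsto (fun t => √(t ^ 2 + b)) atTop atTop :=
    Real.tendsto_sqrt_atTop.comp (tendsto_atTop_add_const_right _ b (tendsto_pow_atTop two_ne_zero))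
  simpa using
    (tendsto_inv_atTop_zero.comp (hr.atTop_mul_atTop₀ (hr.atTop_add_atTop tendsto_id))).neg

lemma integral_Iic_neg_sq_add_rpow_neg_three_halves {a b : ℝ} (ha : 0 ≤ a) (hab : 0 < a ^ 2 + b) :
    ∫ x in Iic (-a), (x ^ 2 + b) ^ (-(3:ℝ)/2) = (√(a ^ 2 + b) * (√(a ^ 2 + b) + a))⁻¹ := by
  have hpos : ∀ x ∈ Ici a, 0 < x ^ 2 + b := fun x hx => by nlinarith [mem_Ici.1 hx]
  rw [← integral_comp_neg_Ioi]
  simp only [neg_sq]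
  rw [integral_Ioi_of_hasDerivAt_of_nonneg'
    (fun x hx => hasDerivAt_neg_inv_sqrt_mul (ha.trans hx) (hpos x hx))
    (fun x hx => Real.rpow_nonneg (hpos x (mem_Ici_of_Ioi hx)).le _)
    (tendsto_neg_inv_sqrt_mul_atTop b)]
  ring

noncomputable def areaPrimitive (k s : ℝ) : ℝ :=
  (1 / k) * artanh (k / s) - artanh ((1 + k ^ 2 + 2 * s) / (2 * s ^ 2 + 2 * s + 1 - k ^ 2))

lemma hasDerivAt_areaPrimitive {k s : ℝ} (hk : 0 < k) (hks : k < s) :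
    HasDerivAt (areaPrimitive k) ((k ^ 2 - 1) / ((s ^ 2 - k ^ 2) * (s + 1))) s := by
  have hs : 0 < s := hk.trans hks
  have hsk : 0 < s ^ 2 - k ^ 2 := by nlinarith
  set N := 1 + k ^ 2 + 2 * s
  set D := 2 * s ^ 2 + 2 * s + 1 - k ^ 2
  have hN : 0 < N := by positivity
  have hDN : D - N = 2 * (s ^ 2 - k ^ 2) := by ring
  have hD : 0 < D := by linarith
  have h₁ : HasDerivAt (fun s => artanh (k / s)) (-k / (s ^ 2 - k ^ 2)) s := by
    refine ((hasDerivAt_artanh (abs_lt.2 ⟨by linarith [div_pos hk hs], (div_lt_one hs).2 hks⟩)).comp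
      s ((hasDerivAt_const s k).fun_div (hasDerivAt_id' s) hs.ne')).congr_deriv ?_
    field_simp
    ring
  have hu : HasDerivAt (fun s => (1 + k ^ 2 + 2 * s) / (2 * s ^ 2 + 2 * s + 1 - k ^ 2))
      ((2 * D - N * (4 * s + 2)) / D ^ 2) s := by
    have hDderiv := ((((hasDerivAt_pow 2 s).const_mul 2).fun_add
      ((hasDerivAt_id' s).const_mul 2)).add_const 1).sub_const (k ^ 2)
    refine ((((hasDerivAt_id' s).const_mul 2).const_add (1 + k ^ 2)).fun_div hDderiv
      hD.ne').congr_deriv ?_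
    ring
  have h₂ : HasDerivAt (fun s => artanh ((1 + k ^ 2 + 2 * s) / (2 * s ^ 2 + 2 * s + 1 - k ^ 2)))
      (-(s + k ^ 2) / ((s ^ 2 - k ^ 2) * (s + 1))) s := by
    refine ((hasDerivAt_artanh (abs_lt.2 ⟨by linarith [div_pos hN hD],
      (div_lt_one hD).2 (by linarith)⟩)).comp s hu).congr_deriv ?_
    rw [show 1 - (N / D) ^ 2 = 4 * (s ^ 2 - k ^ 2) * (s + 1) ^ 2 / D ^ 2 by field_simp; ring]
    field_simp
    ring
  refine ((h₁.const_mul (1 / k)).sub h₂).congr_deriv ?_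
  field_simp
  ring

lemma tendsto_areaPrimitive_atTop (k : ℝ) : Tendsto (areaPrimitive k) atTop (𝓝 0) := by
  have h₁ : Tendsto (fun s => k / s) atTop (𝓝 0) := tendsto_const_nhds.div_atTop tendsto_id
  have hnum : Tendsto (fun s : ℝ => (1 + k ^ 2) * s⁻¹ + 2) atTop (𝓝 2) := by
    have := (tendsto_inv_atTop_zero.const_mul (1 + k ^ 2)).add_const 2
    rwa [mul_zero, zero_add] at this
  have hden : Tendsto (fun s : ℝ => 2 * s + 2 + (1 - k ^ 2) * s⁻¹) atTop atTop := by
    refine Tendsto.atTop_add ?_ (tendsto_inv_atTop_zero.const_mul _)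
    exact tendsto_atTop_add_const_right _ 2 (tendsto_id.const_mul_atTop two_pos)
  have h₂ : Tendsto (fun s => (1 + k ^ 2 + 2 * s) / (2 * s ^ 2 + 2 * s + 1 - k ^ 2)) atTop
      (𝓝 0) := by
    refine (hnum.div_atTop hden).congr' ?_
    filter_upwards [eventually_gt_atTop 0] with s hs
    field_simp
    ring
  have := ((continuousAt_artanh_zero.tendsto.comp h₁).const_mul (1 / k)).sub
    (continuousAt_artanh_zero.tendsto.comp h₂)
  rw [artanh_zero, mul_zero, sub_zero] at this
  exact this

lemma one_sub_sq_mul_pos {C y : ℝ} (hC0 : 0 < C) (hC1 : C < 1) (hy : y < 1) :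
    0 < 1 - C ^ 2 * (1 + y) / 2 := by
  have : C ^ 2 < 1 := by nlinarith
  rcases le_or_gt (1 + y) 0 with h | h <;> nlinarith

lemma integral_horizontal_slice {C y : ℝ} (hC0 : 0 < C) (hC1 : C < 1) (hy : y < 1) :
    ∫ x in Iic (-(1 / C) * √(2 * (1 - y))), (x ^ 2 + y ^ 2 - 1) ^ (-(3:ℝ)/2) =
      C ^ 2 / (2 * (1 - y) * √(1 - C ^ 2 * (1 + y) / 2) * (√(1 - C ^ 2 * (1 + y) / 2) + 1)) := by
  simp only [add_sub_assoc, neg_mul]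
  have h1y : 0 < 1 - y := by linarith
  have hs0 : 0 < √(1 - C ^ 2 * (1 + y) / 2) := Real.sqrt_pos.2 (one_sub_sq_mul_pos hC0 hC1 hy)
  have hs2 := Real.sq_sqrt (one_sub_sq_mul_pos hC0 hC1 hy).le
  generalize √(1 - C ^ 2 * (1 + y) / 2) = s at hs0 hs2 ⊢
  have ha0 : 0 < (1 / C) * √(2 * (1 - y)) := by positivity
  have ha2 : ((1 / C) * √(2 * (1 - y))) ^ 2 = 2 * (1 - y) / C ^ 2 := by
    rw [mul_pow, Real.sq_sqrt (by linarith)]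
    ring
  generalize (1 / C) * √(2 * (1 - y)) = a at ha0 ha2 ⊢
  have hab : a ^ 2 + (y ^ 2 - 1) = (a * s) ^ 2 := by
    rw [mul_pow, ha2, hs2]
    field_simp
    ring
  rw [integral_Iic_neg_sq_add_rpow_neg_three_halves ha0.le (by rw [hab]; positivity), hab,
    Real.sqrt_sq (by positivity), show a * s * (a * s + a) = a ^ 2 * (s * (s + 1)) by ring, ha2]
  field_simp

lemma hasDerivAt_areaPrimitive_sqrt {C y : ℝ} (hC0 : 0 < C) (hC1 : C < 1) (hy : y < 1) :
    HasDerivAt (fun y => areaPrimitive √(1 - C ^ 2) √(1 - C ^ 2 * (1 + y) / 2))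
      (C ^ 2 / (2 * (1 - y) * √(1 - C ^ 2 * (1 + y) / 2) * (√(1 - C ^ 2 * (1 + y) / 2) + 1)))
      y := by
  have hC2 : 0 < 1 - C ^ 2 := by nlinarith
  have hs := one_sub_sq_mul_pos hC0 hC1 hy
  have hks : √(1 - C ^ 2) < √(1 - C ^ 2 * (1 + y) / 2) := Real.sqrt_lt_sqrt hC2.le
    (by nlinarith [mul_pos (pow_pos hC0 2) (sub_pos.2 hy)])
  have hsqrt : HasDerivAt (fun y => √(1 - C ^ 2 * (1 + y) / 2))
      (-C ^ 2 / (4 * √(1 - C ^ 2 * (1 + y) / 2))) y := by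
    refine (((((hasDerivAt_id' y).const_add 1).const_mul (C ^ 2)).div_const 2).const_sub 1).sqrt
      hs.ne' |>.congr_deriv ?_
    ring
  refine ((hasDerivAt_areaPrimitive (Real.sqrt_pos.2 hC2) hks).comp y hsqrt).congr_deriv ?_
  have h1y : 1 - y ≠ 0 := by linarith
  have hs0 := Real.sqrt_pos.2 hs
  rw [Real.sq_sqrt hC2.le, Real.sq_sqrt hs.le,
    show 1 - C ^ 2 * (1 + y) / 2 - (1 - C ^ 2) = C ^ 2 * (1 - y) / 2 by ring]
  have hC := hC0.ne'
  generalize √(1 - C ^ 2 * (1 + y) / 2) = s at hs0 ⊢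
  field_simp
  ring

lemma tendsto_areaPrimitive_sqrt_atBot {C : ℝ} (hC : C ≠ 0) :
    Tendsto (fun y => areaPrimitive √(1 - C ^ 2) √(1 - C ^ 2 * (1 + y) / 2)) atBot (𝓝 0) := by
  have hlin : Tendsto (fun y => 1 - C ^ 2 * (1 + y) / 2) atBot atTop :=
    (tendsto_atTop_add_const_right _ (1 - C ^ 2 / 2)
      (tendsto_neg_atBot_atTop.const_mul_atTop (by positivity : 0 < C ^ 2 / 2))).congr
      fun y => by ring
  exact (tendsto_areaPrimitive_atTop _).comp (Real.tendsto_sqrt_atTop.comp hlin)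

lemma areaPrimitive_sqrt {C η : ℝ} (hC0 : 0 < C) (hC1 : C < 1) (hη : η < 1) :
    areaPrimitive √(1 - C ^ 2) √(1 - C ^ 2 * (1 + η) / 2) =
      (1 / Real.sqrt (1 - C ^ 2)) *
          artanh (Real.sqrt (1 - C ^ 2) / Real.sqrt (1 - C ^ 2 * (1 + η) / 2)) -
        artanh ((2 - C ^ 2 + 2 * Real.sqrt (1 - C ^ 2 * (1 + η) / 2)) /
          (2 - C ^ 2 * η + 2 * Real.sqrt (1 - C ^ 2 * (1 + η) / 2))) := by
  rw [areaPrimitive, Real.sq_sqrt (by nlinarith), Real.sq_sqrt (one_sub_sq_mul_pos hC0 hC1 hη).le]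
  congr 3 <;> ring

theorem sds_area_E (C η : ℝ) (hC0 : 0 < C) (hC1 : C < 1) (hη : η < 1) :
    (∫ y in Set.Iic η, ∫ x in Set.Iic (-(1 / C) * Real.sqrt (2 * (1 - y))),
        (x ^ 2 + y ^ 2 - 1) ^ (-(3:ℝ)/2)) =
      (1 / Real.sqrt (1 - C ^ 2)) *
          artanh (Real.sqrt (1 - C ^ 2) / Real.sqrt (1 - C ^ 2 * (1 + η) / 2)) -
        artanh ((2 - C ^ 2 + 2 * Real.sqrt (1 - C ^ 2 * (1 + η) / 2)) /
          (2 - C ^ 2 * η + 2 * Real.sqrt (1 - C ^ 2 * (1 + η) / 2))) := by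
  rw [setIntegral_congr_fun measurableSet_Iic
      (fun y hy => integral_horizontal_slice hC0 hC1 ((mem_Iic.1 hy).trans_lt hη)),
    integral_Iic_of_hasDerivAt_of_nonneg'
      (fun y hy => hasDerivAt_areaPrimitive_sqrt hC0 hC1 ((mem_Iic.1 hy).trans_lt hη))
      (fun y hy => ?_) (tendsto_areaPrimitive_sqrt_atBot hC0.ne'),
    sub_zero, areaPrimitive_sqrt hC0 hC1 hη]
  have : 0 < 1 - y := by linarith [mem_Iio.1 hy]
  positivity
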